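/- The derivative of Ψ, where Ψ(x)=0 for x ≤ 1/2 and Ψ(x)=exp(1-1/(2x-1)²) for x > 1/2, satisfies 0 ≤ Ψ'(x) ≤ √(54/e) for all x ∈ ℝ. -/

import Mathlib

open scoped BigOperators

/-- Ψ(x) = 0 for x ≤ 1/2 and exp(1 - 1/(2x-1)²) for x > 1/2. -/
noncomputable def Psi (x : ℝ) : ℝ :=
  if x ≤ 1/2 then 0 else Real.exp (1 - 1 / (2*x - 1)^2)

/-- Φ(y) = √e · ∫_{-∞}^y e^{-t²/2} dt. -/
noncomputable def Phi (y : ℝ) : ℝ :=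
  Real.sqrt (Real.exp 1) * ∫ t in Set.Iic y, Real.exp (-t^2/2)

/-- The Nesterov-style hard instance f̄_T (0-indexed coordinates). -/
noncomputable def fbar (T : ℕ) (x : Fin T → ℝ) : ℝ :=
  ∑ i : Fin T,
    if (i : ℕ) = 0 then -(Psi 1 * Phi (x i))
    else Psi (-(x ⟨i.1 - 1, lt_of_le_of_lt (Nat.sub_le _ _) i.isLt⟩)) * Phi (-(x i))
         - Psi (x ⟨i.1 - 1, lt_of_le_of_lt (Nat.sub_le _ _) i.isLt⟩) * Phi (x i)

/-- j-th partial derivative of f̄_T at x. -/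
noncomputable def fpartial (T : ℕ) (x : Fin T → ℝ) (j : Fin T) : ℝ :=
  deriv (fun s => fbar T (Function.update x j s)) (x j)

open Real Filter Topology Asymptotics

lemma Psi_of_le {x : ℝ} (hx : x ≤ 1/2) : Psi x = 0 := if_pos hx

lemma Psi_of_gt {x : ℝ} (hx : 1/2 < x) : Psi x = exp (1 - 1 / (2*x - 1)^2) :=
  if_neg hx.not_ge

lemma Psi_nonneg (x : ℝ) : 0 ≤ Psi x := by
  unfold Psi; split <;> positivity

/-- `e^{-1/v} ≤ v` for `v > 0` is `1 + 1/v ≤ e^{1/v}` inverted. -/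
lemma Psi_le_exp_one_mul_sq (x : ℝ) : Psi x ≤ exp 1 * (2*x - 1)^2 := by
  rcases le_or_gt x (1/2) with hx | hx
  · rw [Psi_of_le hx]; positivity
  · have hv : 0 < (2*x - 1)^2 := by nlinarith
    have hinv : exp (-(1 / (2*x - 1)^2)) ≤ (2*x - 1)^2 := by
      rw [exp_neg, inv_le_comm₀ (exp_pos _) hv, ← one_div]
      linarith [add_one_le_exp (1 / (2*x - 1)^2)]
    calc Psi x = exp 1 * exp (-(1 / (2*x - 1)^2)) := by
          rw [Psi_of_gt hx, ← exp_add, sub_eq_add_neg]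
      _ ≤ exp 1 * (2*x - 1)^2 := by gcongr

lemma hasDerivAt_Psi_of_gt {x : ℝ} (hx : 1/2 < x) :
    HasDerivAt Psi (exp (1 - 1 / (2*x - 1)^2) * (4 / (2*x - 1)^3)) x := by
  have hu : 2*x - 1 ≠ 0 := by linarith
  have hlin : HasDerivAt (fun y : ℝ => 2*y - 1) 2 x := by
    simpa using ((hasDerivAt_id x).const_mul 2).sub_const 1
  have hinner : HasDerivAt (fun y => 1 - ((2*y - 1)^2)⁻¹) (4 / (2*x - 1)^3) x := by
    refine (((hlin.fun_pow 2).fun_inv (pow_ne_zero 2 hu)).const_sub 1).congr_deriv ?_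
    field_simp
    ring
  rw [one_div]
  refine hinner.exp.congr_of_eventuallyEq ?_
  filter_upwards [Ioi_mem_nhds hx] with y hy
  rw [Psi_of_gt hy, one_div]

lemma hasDerivAt_Psi_of_lt {x : ℝ} (hx : x < 1/2) : HasDerivAt Psi 0 x :=
  (hasDerivAt_const x (0:ℝ)).congr_of_eventuallyEq <| by
    filter_upwards [Iio_mem_nhds hx] with y hy using Psi_of_le hy.le

lemma hasDerivAt_Psi_half : HasDerivAt Psi 0 (1/2) := by
  rw [hasDerivAt_iff_isLittleO, Psi_of_le le_rfl]
  have hbound : Psi =O[𝓝 (1/2)] fun y => ‖y - 1/2‖^2 :=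
    IsBigO.of_bound (4 * exp 1) <| Eventually.of_forall fun y => by
      rw [norm_of_nonneg (Psi_nonneg y), norm_pow, norm_norm, Real.norm_eq_abs, sq_abs]
      linarith [Psi_le_exp_one_mul_sq y]
  simpa using hbound.trans_isLittleO (isLittleO_pow_sub_sub (1/2 : ℝ) one_lt_two)

lemma deriv_Psi (x : ℝ) :
    deriv Psi x = if x ≤ 1/2 then 0 else exp (1 - 1 / (2*x - 1)^2) * (4 / (2*x - 1)^3) := by
  split_ifs with hx
  · rcases hx.lt_or_eq with hx | rfl
    · exact (hasDerivAt_Psi_of_lt hx).deriv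
    · exact hasDerivAt_Psi_half.deriv
  · exact (hasDerivAt_Psi_of_gt (not_le.mp hx)).deriv

/-- With `t = 1/u²` the square of the left side is `16 t³ e^{2-2t}`, maximal at `t = 3/2`;
the bound is `s³ ≤ e^{3(s-1)}` for `s = 2t/3`. -/
lemma exp_one_sub_inv_sq_mul_le {u : ℝ} (hu : 0 < u) :
    exp (1 - 1 / u^2) * (4 / u^3) ≤ √(54 / exp 1) := by
  rw [le_sqrt (by positivity) (by positivity)]
  set s : ℝ := 2 / (3 * u^2)
  have hs : s^3 ≤ exp (2 / u^2 - 3) :=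
    calc s^3 ≤ exp (s - 1)^3 := by
          gcongr; linarith [add_one_le_exp (s - 1)]
      _ = exp (2 / u^2 - 3) := by
          rw [← exp_nat_mul]; congr 1; simp only [s]; field_simp; ring
  calc (exp (1 - 1 / u^2) * (4 / u^3))^2 = 54 * s^3 * exp (2 - 2 / u^2) := by
        rw [mul_pow, ← exp_nat_mul]; simp only [s]; field_simp; ring_nf
    _ ≤ 54 * exp (2 / u^2 - 3) * exp (2 - 2 / u^2) := by gcongr
    _ = 54 / exp 1 := by
        rw [mul_assoc, ← exp_add, show 2 / u^2 - 3 + (2 - 2 / u^2) = -1 by ring, exp_neg,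
          div_eq_mul_inv]

/-- 0 ≤ Ψ'(x) ≤ √(54/e) for all real x. -/
theorem stmt_4 : ∀ x : ℝ, 0 ≤ deriv Psi x ∧ deriv Psi x ≤ Real.sqrt (54 / Real.exp 1) := by
  intro x
  rw [deriv_Psi]
  split_ifs with hx
  · exact ⟨le_rfl, sqrt_nonneg _⟩
  · have hu : 0 < 2*x - 1 := by linarith
    exact ⟨by positivity, exp_one_sub_inv_sq_mul_le hu⟩
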